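/- (β-Lagrange identity on (a,b).) Let a, b ∈ I with a ≤ s0 ≤ b, let r : I → ℝ be continuous on [a,b], and let y, z : I → ℂ belong to L²_β(a,b), be continuous and differentiable at s0, with D_β y and D_β z differentiable at s0 and D_β y, D_β z, D_{β^{-1}}D_β y, D_{β^{-1}}D_β z bounded on {β^k(a), β^k(b) : k ∈ ℕ₀} ∪ {s0}. Then ∫_{a}^{b} [ (ℓ_β y)(t)·conj(z(t)) − y(t)·conj((ℓ_β z)(t)) ] d_β t = [y, conj z](b) − [y, conj z](a). -/

import Mathlib

open Function Set ComplexConjugate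

/-- The β-derivative `D_β f` of `f : ℝ → ℂ`:
`(f (β t) - f t) / (β t - t)` for `t ≠ s0`, and `f' s0` at `t = s0`. -/
noncomputable def Dq (β : ℝ → ℝ) (s0 : ℝ) (f : ℝ → ℂ) (t : ℝ) : ℂ :=
  if t = s0 then deriv f s0 else (f (β t) - f t) / ((β t : ℂ) - (t : ℂ))

/-- The β-integral `∫_{s0}^{x} f d_β = ∑_{k} (β^k x - β^{k+1} x) f (β^k x)` (complex-valued). -/
noncomputable def betaInt (β : ℝ → ℝ) (x : ℝ) (f : ℝ → ℂ) : ℂ :=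
  ∑' k : ℕ, ((β^[k] x - β^[k + 1] x : ℝ) : ℂ) * f (β^[k] x)

/-- The β-integral `∫_{s0}^{x} f d_β` for a real-valued integrand. -/
noncomputable def betaIntR (β : ℝ → ℝ) (x : ℝ) (f : ℝ → ℝ) : ℝ :=
  ∑' k : ℕ, (β^[k] x - β^[k + 1] x) * f (β^[k] x)

/-- `∫_a^b f d_β := ∫_{s0}^b f d_β - ∫_{s0}^a f d_β`. -/
noncomputable def betaIntAB (β : ℝ → ℝ) (a b : ℝ) (f : ℝ → ℂ) : ℂ :=
  betaInt β b f - betaInt β a f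

/-- `∫_a^b f d_β` for a real-valued integrand. -/
noncomputable def betaIntRAB (β : ℝ → ℝ) (a b : ℝ) (f : ℝ → ℝ) : ℝ :=
  betaIntR β b f - betaIntR β a f

/-- `D_β β⁻¹`, viewed as a complex-valued function. -/
noncomputable def DbinvC (β βinv : ℝ → ℝ) (s0 : ℝ) : ℝ → ℂ :=
  Dq β s0 fun u => (βinv u : ℂ)

/-- The β-Sturm–Liouville operator
`ℓ_β y (t) = -(D_β β⁻¹)(t) · (D_{β⁻¹} (D_β y))(t) + r t · y t`. -/
noncomputable def ellBeta (β βinv : ℝ → ℝ) (s0 : ℝ) (r : ℝ → ℝ) (y : ℝ → ℂ) (t : ℝ) : ℂ :=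
  -(DbinvC β βinv s0 t) * Dq βinv s0 (Dq β s0 y) t + (r t : ℂ) * y t

/-- The β-Wronskian `[y,z](t) = y t · (D_{β⁻¹} z) t - z t · (D_{β⁻¹} y) t`. -/
noncomputable def wronk (βinv : ℝ → ℝ) (s0 : ℝ) (y z : ℝ → ℂ) (t : ℝ) : ℂ :=
  y t * Dq βinv s0 z t - z t * Dq βinv s0 y t

/-- The β-exponential `e_{p,β}(t) = 1 / ∏_k (1 - p(β^k t)(β^k t - β^{k+1} t))`. -/
noncomputable def ebeta (β : ℝ → ℝ) (p : ℝ → ℂ) (t : ℝ) : ℂ :=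
  1 / ∏' k : ℕ, (1 - p (β^[k] t) * ((β^[k] t - β^[k + 1] t : ℝ) : ℂ))

/-- The β-exponential `E_{p,β}(t) = ∏_k (1 + p(β^k t)(β^k t - β^{k+1} t))`. -/
noncomputable def Ebeta (β : ℝ → ℝ) (p : ℝ → ℂ) (t : ℝ) : ℂ :=
  ∏' k : ℕ, (1 + p (β^[k] t) * ((β^[k] t - β^[k + 1] t : ℝ) : ℂ))

/-- `sin_{p,β}(t) = (e_{ip,β}(t) - e_{-ip,β}(t)) / (2i)`. -/
noncomputable def sinBeta (β : ℝ → ℝ) (p : ℝ → ℂ) (t : ℝ) : ℂ :=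
  (ebeta β (fun s => Complex.I * p s) t - ebeta β (fun s => -(Complex.I * p s)) t) /
    (2 * Complex.I)

/-- `cos_{p,β}(t) = (e_{ip,β}(t) + e_{-ip,β}(t)) / 2`. -/
noncomputable def cosBeta (β : ℝ → ℝ) (p : ℝ → ℂ) (t : ℝ) : ℂ :=
  (ebeta β (fun s => Complex.I * p s) t + ebeta β (fun s => -(Complex.I * p s)) t) / 2

/-!
Write `W` for the `β`-Wronskian `[y, conj z]`. For `t ∈ I` the contribution
`(t - β t) · (ℓ_β y · conj z - y · conj (ℓ_β z))(t)` of one step of the `β`-integral equals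
`W t - W (β t)`: the `r`-terms cancel because `r` and `D_β β⁻¹` are real, and what remains is a
discrete product rule for `D_{β⁻¹} D_β`. So `∫_{s0}^x` is a telescoping series. The orbit
`β^k x` moves monotonically towards `s0`, hence has summable step lengths and converges to the
unique fixed point `s0`; the bounds on `D_{β⁻¹} D_β y`, `D_{β⁻¹} D_β z` then make the series
absolutely convergent, and `W (β^{k+1} x)` is a continuous expression in `y`, `z`, `D_β y`,
`D_β z` at `β^k x` and `β^{k+1} x`, so the partial sums tend to `W x - W s0`.
-/

open Filter Topology

section Orbit

variable {I : Set ℝ} {β : ℝ → ℝ} {s0 x : ℝ}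

lemma map_mem_uIcc_of_sign (hmono : StrictMonoOn β I) (hs0I : s0 ∈ I) (hfix : β s0 = s0)
    (hsign : ∀ t ∈ I, (t - s0) * (β t - t) ≤ 0) {t : ℝ} (ht : t ∈ I) : β t ∈ uIcc s0 t := by
  have := hsign t ht
  rcases lt_trichotomy t s0 with h | rfl | h
  · rw [uIcc_of_ge h.le]
    exact ⟨by nlinarith, hfix ▸ hmono.monotoneOn ht hs0I h.le⟩
  · simp [hfix]
  · rw [uIcc_of_le h.le]
    exact ⟨hfix ▸ hmono.monotoneOn hs0I ht h.le, by nlinarith⟩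

lemma iterate_mem_uIcc (hIconn : I.OrdConnected) (hs0I : s0 ∈ I)
    (hmaps : ∀ t ∈ I, β t ∈ uIcc s0 t) (hx : x ∈ I) (k : ℕ) : β^[k] x ∈ uIcc s0 x := by
  induction k with
  | zero => exact right_mem_uIcc
  | succ k ih =>
    rw [iterate_succ_apply']
    exact uIcc_subset_uIcc_left ih (hmaps _ (hIconn.uIcc_subset hs0I hx ih))

lemma iterate_mem (hIconn : I.OrdConnected) (hs0I : s0 ∈ I)
    (hmaps : ∀ t ∈ I, β t ∈ uIcc s0 t) (hx : x ∈ I) (k : ℕ) : β^[k] x ∈ I :=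
  hIconn.uIcc_subset hs0I hx (iterate_mem_uIcc hIconn hs0I hmaps hx k)

lemma summable_abs_iterate_sub (hIconn : I.OrdConnected) (hs0I : s0 ∈ I)
    (hmaps : ∀ t ∈ I, β t ∈ uIcc s0 t) (hx : x ∈ I) :
    Summable fun k : ℕ => |β^[k] x - β^[k + 1] x| := by
  have hstep (k : ℕ) : |β^[k] x - β^[k + 1] x| = |β^[k] x - s0| - |β^[k + 1] x - s0| := by
    rw [iterate_succ_apply']
    rcases mem_uIcc.1 (hmaps _ (iterate_mem hIconn hs0I hmaps hx k)) with ⟨h₁, h₂⟩ | ⟨h₁, h₂⟩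
    · rw [abs_of_nonneg (by linarith), abs_of_nonneg (by linarith), abs_of_nonneg (by linarith)]
      ring
    · rw [abs_of_nonpos (by linarith), abs_of_nonpos (by linarith), abs_of_nonpos (by linarith)]
      ring
  refine summable_of_sum_range_le (c := |x - s0|) (fun _ => abs_nonneg _) fun n => ?_
  rw [Finset.sum_congr rfl fun k _ => hstep k, Finset.sum_range_sub' (fun k => |β^[k] x - s0|)]
  simp

lemma tendsto_iterate_of_sign (hIconn : I.OrdConnected) (hs0I : s0 ∈ I)
    (hmaps : ∀ t ∈ I, β t ∈ uIcc s0 t) (hcont : ContinuousOn β I)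
    (huniq : ∀ t ∈ I, (t - s0) * (β t - t) = 0 → t = s0) (hx : x ∈ I) :
    Tendsto (fun k : ℕ => β^[k] x) atTop (𝓝 s0) := by
  obtain ⟨c, hc⟩ := cauchySeq_tendsto_of_complete <| cauchySeq_of_summable_dist
    (f := fun k => β^[k] x) <| by
      simpa only [Real.dist_eq] using summable_abs_iterate_sub hIconn hs0I hmaps hx
  have hcI : c ∈ I := hIconn.uIcc_subset hs0I hx <| isClosed_Icc.mem_of_tendsto hc <|
    Eventually.of_forall (iterate_mem_uIcc hIconn hs0I hmaps hx)
  have hβc : β c = c := by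
    refine tendsto_nhds_unique ?_ ((tendsto_add_atTop_iff_nat 1).2 hc)
    have := (hcont c hcI).tendsto.comp <| tendsto_nhdsWithin_iff.2
      ⟨hc, Eventually.of_forall (iterate_mem hIconn hs0I hmaps hx)⟩
    simpa [Function.comp_def, iterate_succ_apply'] using this
  rwa [← huniq c hcI (by rw [hβc, sub_self, mul_zero])]

end Orbit

section DifferenceQuotient

variable {g : ℝ → ℝ} {s0 t : ℝ} {f : ℝ → ℂ}

lemma Dq_of_ne (ht : t ≠ s0) : Dq g s0 f t = (f (g t) - f t) / ((g t : ℂ) - t) := if_neg ht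

lemma Dq_self : Dq g s0 f s0 = deriv f s0 := if_pos rfl

lemma Dq_conj : Dq g s0 (fun u => conj (f u)) t = conj (Dq g s0 f t) := by
  by_cases ht : t = s0
  · subst ht
    simp only [Dq_self, starRingEnd_apply]
    exact deriv.star
  · simp [Dq_of_ne ht]

lemma Dq_mul_sub (ht : t ≠ s0) (hg : g t ≠ t) :
    Dq g s0 f t * ((g t : ℂ) - t) = f (g t) - f t :=
  Dq_of_ne ht ▸ div_mul_cancel₀ _ (sub_ne_zero.2 (by exact_mod_cast hg))

lemma Dq_apply_eq_of_leftInverse {h : ℝ → ℝ} (ht : t ≠ s0) (hht : h t ≠ s0) (hgh : g (h t) = t) :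
    Dq g s0 f (h t) = Dq h s0 f t := by
  rw [Dq_of_ne hht, Dq_of_ne ht, hgh, ← neg_sub (f t), ← neg_sub (t : ℂ), neg_div_neg_eq]

end DifferenceQuotient

section PointwiseLagrange

variable {I : Set ℝ} {β βinv : ℝ → ℝ} {s0 t : ℝ} {r : ℝ → ℝ} {y z : ℝ → ℂ}

lemma map_ne_self_of_ne (huniq : ∀ t ∈ I, (t - s0) * (β t - t) = 0 → t = s0) (ht : t ∈ I)
    (hts : t ≠ s0) : β t ≠ t :=
  fun h => hts (huniq t ht (by rw [h, sub_self, mul_zero]))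

lemma inv_apply_of_map_eq_self (hinv : LeftInvOn βinv β I) (hs0I : s0 ∈ I) (hfix : β s0 = s0) :
    βinv s0 = s0 :=
  (congrArg βinv hfix).symm.trans (hinv hs0I)

lemma wronk_conj_map (hinv : InvOn βinv β I I) (hs0I : s0 ∈ I) (hfix : β s0 = s0) (ht : t ∈ I) :
    wronk βinv s0 y (fun u => conj (z u)) (β t) =
      y (β t) * conj (Dq β s0 z t) - conj (z (β t)) * Dq β s0 y t := by
  by_cases hts : t = s0
  · subst hts
    rw [hfix, wronk, Dq_conj, Dq_self, Dq_self, Dq_self, Dq_self]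
  · have hβt : β t ≠ s0 := fun h =>
      hts (by rw [← hinv.1 ht, h, inv_apply_of_map_eq_self hinv.1 hs0I hfix])
    rw [wronk, Dq_conj, Dq_apply_eq_of_leftInverse hts hβt (hinv.1 ht),
      Dq_apply_eq_of_leftInverse hts hβt (hinv.1 ht)]

lemma wronk_sub_wronk_map (hinv : InvOn βinv β I I) (hs0I : s0 ∈ I) (hfix : β s0 = s0)
    (huniq : ∀ t ∈ I, (t - s0) * (β t - t) = 0 → t = s0) (ht : t ∈ I) :
    wronk βinv s0 y (fun u => conj (z u)) t - wronk βinv s0 y (fun u => conj (z u)) (β t) =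
      ((βinv t - t : ℝ) : ℂ) *
        (y t * conj (Dq βinv s0 (Dq β s0 z) t) - Dq βinv s0 (Dq β s0 y) t * conj (z t)) := by
  by_cases hts : t = s0
  · subst hts
    simp [hfix, inv_apply_of_map_eq_self hinv.1 hs0I hfix]
  have hβw : β (βinv t) = t := hinv.2 ht
  have hws : βinv t ≠ s0 := fun h => hts (by rw [← hβw, h, hfix])
  have hwt : βinv t ≠ t := fun h => map_ne_self_of_ne huniq ht hts (by rw [← h, hβw, h])
  have hβt := map_ne_self_of_ne huniq ht hts
  have hy := Dq_mul_sub (f := y) hts hβt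
  have hz := congrArg conj (Dq_mul_sub (f := z) hts hβt)
  have hDy := Dq_mul_sub (f := Dq β s0 y) hts hwt
  have hDz := congrArg conj (Dq_mul_sub (f := Dq β s0 z) hts hwt)
  rw [Dq_apply_eq_of_leftInverse hts hws hβw] at hDy hDz
  simp only [map_mul, map_sub, Complex.conj_ofReal] at hz hDz
  rw [wronk_conj_map hinv hs0I hfix ht, wronk, Dq_conj]
  push_cast
  linear_combination (-y t) * hDz + conj (z t) * hDy + conj (Dq β s0 z t) * hy -
    Dq β s0 y t * hz

lemma sub_map_mul_lagrange_eq_inv_sub_mul (hinv : InvOn βinv β I I) (hs0I : s0 ∈ I)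
    (hfix : β s0 = s0) (huniq : ∀ t ∈ I, (t - s0) * (β t - t) = 0 → t = s0) (ht : t ∈ I) :
    ((t - β t : ℝ) : ℂ) *
        (ellBeta β βinv s0 r y t * conj (z t) - y t * conj (ellBeta β βinv s0 r z t)) =
      ((βinv t - t : ℝ) : ℂ) *
        (y t * conj (Dq βinv s0 (Dq β s0 z) t) - Dq βinv s0 (Dq β s0 y) t * conj (z t)) := by
  by_cases hts : t = s0
  · subst hts
    simp [hfix, inv_apply_of_map_eq_self hinv.1 hs0I hfix]
  have hDb : DbinvC β βinv s0 t * ((β t : ℂ) - t) = t - βinv t := by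
    rw [DbinvC, Dq_mul_sub hts (map_ne_self_of_ne huniq ht hts), hinv.1 ht]
  have hDb_real : conj (DbinvC β βinv s0 t) = DbinvC β βinv s0 t := by
    rw [DbinvC, ← Dq_conj]
    simp only [Complex.conj_ofReal]
  simp only [ellBeta, map_add, map_mul, map_neg, hDb_real, Complex.conj_ofReal]
  push_cast
  linear_combination
    (Dq βinv s0 (Dq β s0 y) t * conj (z t) - y t * conj (Dq βinv s0 (Dq β s0 z) t)) * hDb

lemma sub_map_mul_lagrange_eq_wronk_sub (hinv : InvOn βinv β I I) (hs0I : s0 ∈ I)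
    (hfix : β s0 = s0) (huniq : ∀ t ∈ I, (t - s0) * (β t - t) = 0 → t = s0) (ht : t ∈ I) :
    ((t - β t : ℝ) : ℂ) *
        (ellBeta β βinv s0 r y t * conj (z t) - y t * conj (ellBeta β βinv s0 r z t)) =
      wronk βinv s0 y (fun u => conj (z u)) t - wronk βinv s0 y (fun u => conj (z u)) (β t) := by
  rw [sub_map_mul_lagrange_eq_inv_sub_mul hinv hs0I hfix huniq ht,
    wronk_sub_wronk_map hinv hs0I hfix huniq ht]

end PointwiseLagrange

lemma tsum_sub_succ_of_tendsto {E : Type*} [AddCommGroup E] [TopologicalSpace E]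
    [IsTopologicalAddGroup E] [T2Space E] {g : ℕ → E} {L : E}
    (hs : Summable fun k => g k - g (k + 1)) (hg : Tendsto g atTop (𝓝 L)) :
    ∑' k, (g k - g (k + 1)) = g 0 - L := by
  refine tendsto_nhds_unique hs.hasSum.tendsto_sum_nat ?_
  simpa only [Finset.sum_range_sub'] using tendsto_const_nhds.sub hg

section BetaIntegral

variable {I : Set ℝ} {β βinv : ℝ → ℝ} {s0 x : ℝ} {r : ℝ → ℝ} {y z : ℝ → ℂ}

lemma tendsto_wronk_iterate (hinv : InvOn βinv β I I) (hs0I : s0 ∈ I) (hfix : β s0 = s0)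
    (horb : ∀ k, β^[k] x ∈ I) (htend : Tendsto (fun k : ℕ => β^[k] x) atTop (𝓝 s0))
    (hyc : ContinuousAt y s0) (hzc : ContinuousAt z s0)
    (hDyc : ContinuousAt (Dq β s0 y) s0) (hDzc : ContinuousAt (Dq β s0 z) s0) :
    Tendsto (fun k : ℕ => wronk βinv s0 y (fun u => conj (z u)) (β^[k] x)) atTop
      (𝓝 (wronk βinv s0 y (fun u => conj (z u)) s0)) := by
  have htend' : Tendsto (fun k : ℕ => β^[k + 1] x) atTop (𝓝 s0) :=
    htend.comp (tendsto_add_atTop_nat 1)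
  have hconj {w : ℝ → ℂ} (hw : ContinuousAt w s0) {u : ℕ → ℝ}
      (hu : Tendsto u atTop (𝓝 s0)) : Tendsto (fun k => conj (w (u k))) atTop (𝓝 (conj (w s0))) :=
    (Complex.continuous_conj.tendsto _).comp (hw.tendsto.comp hu)
  have hlim := ((hyc.tendsto.comp htend').mul (hconj hDzc htend)).sub
    ((hconj hzc htend').mul (hDyc.tendsto.comp htend))
  have hW0 := wronk_conj_map (y := y) (z := z) hinv hs0I hfix hs0I
  rw [hfix] at hW0
  rw [← tendsto_add_atTop_iff_nat 1, hW0]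
  refine hlim.congr fun k => ?_
  simp only [Function.comp_apply, iterate_succ_apply', wronk_conj_map hinv hs0I hfix (horb k)]

lemma summable_wronk_iterate_sub (hinv : InvOn βinv β I I) (hs0I : s0 ∈ I) (hfix : β s0 = s0)
    (huniq : ∀ t ∈ I, (t - s0) * (β t - t) = 0 → t = s0) (horb : ∀ k, β^[k] x ∈ I)
    (htend : Tendsto (fun k : ℕ => β^[k] x) atTop (𝓝 s0))
    (hsum : Summable fun k : ℕ => |β^[k] x - β^[k + 1] x|)
    (hyc : ContinuousAt y s0) (hzc : ContinuousAt z s0) {C₁ C₂ : ℝ}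
    (hC₁ : ∀ k, ‖Dq βinv s0 (Dq β s0 y) (β^[k] x)‖ ≤ C₁)
    (hC₂ : ∀ k, ‖Dq βinv s0 (Dq β s0 z) (β^[k] x)‖ ≤ C₂) :
    Summable fun k : ℕ => wronk βinv s0 y (fun u => conj (z u)) (β^[k] x) -
      wronk βinv s0 y (fun u => conj (z u)) (β^[k + 1] x) := by
  obtain ⟨Cy, hCy⟩ := (hyc.tendsto.comp htend).norm.bddAbove_range
  obtain ⟨Cz, hCz⟩ := (hzc.tendsto.comp htend).norm.bddAbove_range
  refine (summable_nat_add_iff 1).1 <| (hsum.mul_left (Cy * C₂ + C₁ * Cz)).of_norm_bounded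
    fun k => ?_
  rw [iterate_succ_apply' _ (k + 1), wronk_sub_wronk_map hinv hs0I hfix huniq (horb (k + 1)),
    iterate_succ_apply', hinv.1 (horb k), norm_mul, Complex.norm_real, Real.norm_eq_abs,
    abs_sub_comm, mul_comm, ← iterate_succ_apply' β k x]
  gcongr
  refine (norm_sub_le _ _).trans ?_
  rw [norm_mul, norm_mul, Complex.norm_conj, Complex.norm_conj]
  exact add_le_add
    (mul_le_mul (hCy ⟨_, rfl⟩) (hC₂ _) (norm_nonneg _) ((norm_nonneg _).trans (hCy ⟨0, rfl⟩)))
    (mul_le_mul (hC₁ _) (hCz ⟨_, rfl⟩) (norm_nonneg _) ((norm_nonneg _).trans (hC₁ 0)))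

lemma betaInt_lagrange (hIconn : I.OrdConnected) (hs0I : s0 ∈ I)
    (hmaps : ∀ t ∈ I, β t ∈ uIcc s0 t) (hcont : ContinuousOn β I) (hinv : InvOn βinv β I I)
    (hfix : β s0 = s0) (huniq : ∀ t ∈ I, (t - s0) * (β t - t) = 0 → t = s0) (hx : x ∈ I)
    (hyc : ContinuousAt y s0) (hzc : ContinuousAt z s0)
    (hDyc : ContinuousAt (Dq β s0 y) s0) (hDzc : ContinuousAt (Dq β s0 z) s0) {C₁ C₂ : ℝ}
    (hC₁ : ∀ k, ‖Dq βinv s0 (Dq β s0 y) (β^[k] x)‖ ≤ C₁)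
    (hC₂ : ∀ k, ‖Dq βinv s0 (Dq β s0 z) (β^[k] x)‖ ≤ C₂) :
    betaInt β x (fun t =>
        ellBeta β βinv s0 r y t * conj (z t) - y t * conj (ellBeta β βinv s0 r z t)) =
      wronk βinv s0 y (fun u => conj (z u)) x - wronk βinv s0 y (fun u => conj (z u)) s0 := by
  have horb := iterate_mem hIconn hs0I hmaps hx
  have htend := tendsto_iterate_of_sign hIconn hs0I hmaps hcont huniq hx
  have hterm (k : ℕ) : ((β^[k] x - β^[k + 1] x : ℝ) : ℂ) *
      (ellBeta β βinv s0 r y (β^[k] x) * conj (z (β^[k] x)) -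
        y (β^[k] x) * conj (ellBeta β βinv s0 r z (β^[k] x))) =
      wronk βinv s0 y (fun u => conj (z u)) (β^[k] x) -
        wronk βinv s0 y (fun u => conj (z u)) (β^[k + 1] x) := by
    rw [iterate_succ_apply']
    exact sub_map_mul_lagrange_eq_wronk_sub hinv hs0I hfix huniq (horb k)
  rw [betaInt, tsum_congr hterm]
  exact tsum_sub_succ_of_tendsto
    (summable_wronk_iterate_sub hinv hs0I hfix huniq horb htend
      (summable_abs_iterate_sub hIconn hs0I hmaps hx) hyc hzc hC₁ hC₂)
    (tendsto_wronk_iterate hinv hs0I hfix horb htend hyc hzc hDyc hDzc)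

end BetaIntegral

theorem stmt_10_general
    (I : Set ℝ) (hIconn : I.OrdConnected)
    (β βinv : ℝ → ℝ) (s0 : ℝ)
    (hmono : StrictMonoOn β I) (hcont : ContinuousOn β I)
    (hinv : Set.InvOn βinv β I I)
    (hs0I : s0 ∈ I) (hfix : β s0 = s0)
    (hsign : ∀ t ∈ I, (t - s0) * (β t - t) ≤ 0)
    (huniq : ∀ t ∈ I, (t - s0) * (β t - t) = 0 → t = s0)
    (a b : ℝ) (ha : a ∈ I) (hb : b ∈ I)
    (r : ℝ → ℝ) (y z : ℝ → ℂ)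
    (hyc : ContinuousAt y s0) (hzc : ContinuousAt z s0)
    (hDyd : DifferentiableAt ℝ (Dq β s0 y) s0) (hDzd : DifferentiableAt ℝ (Dq β s0 z) s0)
    (hDDyb : ∃ C, ∀ t ∈ insert s0 (Set.range (fun j : ℕ => β^[j] a) ∪ Set.range (fun j : ℕ => β^[j] b)), ‖Dq βinv s0 (Dq β s0 y) t‖ ≤ C)
    (hDDzb : ∃ C, ∀ t ∈ insert s0 (Set.range (fun j : ℕ => β^[j] a) ∪ Set.range (fun j : ℕ => β^[j] b)), ‖Dq βinv s0 (Dq β s0 z) t‖ ≤ C) :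
    betaIntAB β a b (fun t =>
        ellBeta β βinv s0 r y t * conj (z t) - y t * conj (ellBeta β βinv s0 r z t)) =
      wronk βinv s0 y (fun t => conj (z t)) b - wronk βinv s0 y (fun t => conj (z t)) a := by
  obtain ⟨C₁, hC₁⟩ := hDDyb
  obtain ⟨C₂, hC₂⟩ := hDDzb
  have hmaps (t : ℝ) (ht : t ∈ I) := map_mem_uIcc_of_sign hmono hs0I hfix hsign ht
  have lagrange {x : ℝ} (hx : x ∈ I) (hmem : ∀ k, β^[k] x ∈ insert s0
      (Set.range (fun j : ℕ => β^[j] a) ∪ Set.range (fun j : ℕ => β^[j] b))) :=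
    betaInt_lagrange (r := r) hIconn hs0I hmaps hcont hinv hfix huniq hx hyc hzc
      hDyd.continuousAt hDzd.continuousAt (fun k => hC₁ _ (hmem k)) (fun k => hC₂ _ (hmem k))
  rw [betaIntAB, lagrange hb fun k => mem_insert_of_mem _ (mem_union_right _ (mem_range_self k)),
    lagrange ha fun k => mem_insert_of_mem _ (mem_union_left _ (mem_range_self k))]
  ring

theorem stmt_10
    (I : Set ℝ) (hIconn : I.OrdConnected)
    (β βinv : ℝ → ℝ) (s0 : ℝ)
    (hmono : StrictMonoOn β I) (hcont : ContinuousOn β I)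
    (hbij : Set.BijOn β I I) (hinv : Set.InvOn βinv β I I)
    (hs0I : s0 ∈ I) (hfix : β s0 = s0)
    (hsign : ∀ t ∈ I, (t - s0) * (β t - t) ≤ 0)
    (huniq : ∀ t ∈ I, (t - s0) * (β t - t) = 0 → t = s0)
    (a b : ℝ) (ha : a ∈ I) (hb : b ∈ I) (has0 : a ≤ s0) (hs0b : s0 ≤ b)
    (r : ℝ → ℝ) (hr : ContinuousOn r (Set.Icc a b)) (y z : ℝ → ℂ)
    (hyL2a : Summable fun j : ℕ => (β^[j] a - β^[j + 1] a) * ‖y (β^[j] a)‖ ^ 2)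
    (hyL2b : Summable fun j : ℕ => (β^[j] b - β^[j + 1] b) * ‖y (β^[j] b)‖ ^ 2)
    (hzL2a : Summable fun j : ℕ => (β^[j] a - β^[j + 1] a) * ‖z (β^[j] a)‖ ^ 2)
    (hzL2b : Summable fun j : ℕ => (β^[j] b - β^[j + 1] b) * ‖z (β^[j] b)‖ ^ 2)
    (hyc : ContinuousAt y s0) (hzc : ContinuousAt z s0)
    (hyd : DifferentiableAt ℝ y s0) (hzd : DifferentiableAt ℝ z s0)
    (hDyd : DifferentiableAt ℝ (Dq β s0 y) s0) (hDzd : DifferentiableAt ℝ (Dq β s0 z) s0)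
    (hDyb : ∃ C, ∀ t ∈ insert s0 (Set.range (fun j : ℕ => β^[j] a) ∪ Set.range (fun j : ℕ => β^[j] b)), ‖Dq β s0 y t‖ ≤ C)
    (hDzb : ∃ C, ∀ t ∈ insert s0 (Set.range (fun j : ℕ => β^[j] a) ∪ Set.range (fun j : ℕ => β^[j] b)), ‖Dq β s0 z t‖ ≤ C)
    (hDDyb : ∃ C, ∀ t ∈ insert s0 (Set.range (fun j : ℕ => β^[j] a) ∪ Set.range (fun j : ℕ => β^[j] b)), ‖Dq βinv s0 (Dq β s0 y) t‖ ≤ C)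
    (hDDzb : ∃ C, ∀ t ∈ insert s0 (Set.range (fun j : ℕ => β^[j] a) ∪ Set.range (fun j : ℕ => β^[j] b)), ‖Dq βinv s0 (Dq β s0 z) t‖ ≤ C) :
    betaIntAB β a b (fun t =>
        ellBeta β βinv s0 r y t * conj (z t) - y t * conj (ellBeta β βinv s0 r z t)) =
      wronk βinv s0 y (fun t => conj (z t)) b - wronk βinv s0 y (fun t => conj (z t)) a :=
  stmt_10_general I hIconn β βinv s0 hmono hcont hinv hs0I hfix hsign huniq a b ha hb r y z hyc hzc
    hDyd hDzd hDDyb hDDzb
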